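/- Theorem (inverse of the second-derivative SBP-SAT matrix): Let Ã = A − [e_L, −d_L]·M_L·[e_Lᵀ; −d_Lᵀ] − [e_R, d_R]·M_R·[e_Rᵀ; d_Rᵀ] with M_L = [[σ_Lα_L, 1+σ_Lβ_L],[τ_Lα_L, τ_Lβ_L]] and M_R = [[σ_Rα_R, 1+σ_Rβ_R],[τ_Rα_R, τ_Rβ_R]]. Define ξ_L = −d_Lᵀb_L, ξ_R = d_Rᵀb_R, ξ_C = d_Lᵀb_R (and assume d_Lᵀb_R = −d_Rᵀb_L), δ_L = 1 + σ_Lβ_L − τ_Lα_L, δ_R = 1 + σ_Rβ_R − τ_Rα_R, and the 4×4 matrix Σ = [[σ_L+τ_Lξ_L, −τ_Rξ_C, 0, 0], [−τ_Lξ_C, σ_R+τ_Rξ_R, 0, 0], [δ_L, 0, α_L+β_L/ℓ, −β_L/ℓ], [0, δ_R, −β_R/ℓ, α_R+β_R/ℓ]]. If Σ is invertible, then Ã is invertible with Ã⁻¹ = G₂ + [−τ_Lb_L, −τ_Rb_R, 𝟙−x/ℓ, x/ℓ]·Σ⁻¹·[b_Lᵀ; b_Rᵀ; β_L(𝟙−x/ℓ)ᵀ;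 β_Rxᵀ/ℓ]. -/

import Mathlib

/-!
`Ã` differs from `A` only by boundary terms, so its inverse is a rank-four correction of the
zero-padded interior inverse `G₂`. Everything rests on `A G₂ = I - e_L pᵀ - e_R qᵀ`, where
`p = 𝟙 - x/ℓ` and `q = x/ℓ`: the matrix `G₂ A` fixes every vector vanishing at both ends and
annihilates `A p` and `A q`, which vanish in the interior. This gives `A b_L = -d_L` and
`A b_R = d_R`, and then, with `N` the `(n+1) × 4` matrix of boundary coefficients, `Ã G₂ = I - N V`
and `Ã U = N Σ`. Hence `Ã (G₂ + U Σ⁻¹ V) = I - N V + N Σ Σ⁻¹ V = I`.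
-/

open Matrix Function

theorem Matrix.mul_add_mul_inv_mul_eq_one {m k R : Type*} [Fintype m] [DecidableEq m] [Fintype k]
    [DecidableEq k] [CommRing R] {M G : Matrix m m R} {N U : Matrix m k R} {V : Matrix k m R}
    {S : Matrix k k R} (hG : M * G = 1 - N * V) (hU : M * U = N * S) (hS : IsUnit S.det) :
    M * (G + U * S⁻¹ * V) = 1 := by
  rw [Matrix.mul_add, ← Matrix.mul_assoc, ← Matrix.mul_assoc, hU, hG, Matrix.mul_assoc N,
    mul_nonsing_inv _ hS, Matrix.mul_one, sub_add_cancel]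

section ZeroPadding

variable {ι κ K : Type*}

structure IsZeroPadding [Zero K] (emb : κ → ι) (B : Matrix κ κ K) (G : Matrix ι ι K) : Prop where
  apply_emb : ∀ a b, G (emb a) (emb b) = B a b
  row_eq_zero : ∀ i ∉ Set.range emb, ∀ j, G i j = 0
  col_eq_zero : ∀ i, ∀ j ∉ Set.range emb, G i j = 0

namespace IsZeroPadding

section Zero

variable [Zero K] {emb : κ → ι} {B : Matrix κ κ K} {G : Matrix ι ι K}

theorem transpose (hG : IsZeroPadding emb B G) : IsZeroPadding emb Bᵀ Gᵀ where
  apply_emb a b := hG.apply_emb b a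
  row_eq_zero i hi j := hG.col_eq_zero j i hi
  col_eq_zero i j hj := hG.row_eq_zero j hj i

theorem unique {G' : Matrix ι ι K} (hG : IsZeroPadding emb B G) (hG' : IsZeroPadding emb B G') :
    G = G' := by
  ext i j
  by_cases hi : i ∈ Set.range emb
  · by_cases hj : j ∈ Set.range emb
    · obtain ⟨a, rfl⟩ := hi
      obtain ⟨b, rfl⟩ := hj
      rw [hG.apply_emb, hG'.apply_emb]
    · rw [hG.col_eq_zero i j hj, hG'.col_eq_zero i j hj]
  · rw [hG.row_eq_zero i hi j, hG'.row_eq_zero i hi j]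

theorem transpose_eq_self (hG : IsZeroPadding emb B G) (hB : Bᵀ = B) : Gᵀ = G :=
  (hB ▸ hG.transpose).unique hG

theorem of_range_eq_compl_pair {i₀ i₁ : ι} (hrange : Set.range emb = {i₀, i₁}ᶜ)
    (hint : ∀ a b, G (emb a) (emb b) = B a b)
    (hbd : ∀ j, G i₀ j = 0 ∧ G i₁ j = 0 ∧ G j i₀ = 0 ∧ G j i₁ = 0) : IsZeroPadding emb B G := by
  have hbdry : ∀ i ∉ Set.range emb, i = i₀ ∨ i = i₁ := by
    intro i hi
    rwa [hrange, Set.mem_compl_iff, not_not] at hi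
  refine ⟨hint, fun i hi j => ?_, fun i j hj => ?_⟩
  · rcases hbdry i hi with rfl | rfl
    exacts [(hbd j).1, (hbd j).2.1]
  · rcases hbdry j hj with rfl | rfl
    exacts [(hbd i).2.2.1, (hbd i).2.2.2]

end Zero

variable [Fintype ι] [CommRing K] {emb : κ → ι} {B : Matrix κ κ K} {G : Matrix ι ι K}

theorem mulVec_eq_zero (hG : IsZeroPadding emb B G) {u : ι → K} (hu : ∀ a, u (emb a) = 0) :
    G *ᵥ u = 0 := by
  ext i
  refine Finset.sum_eq_zero fun j _ => ?_
  by_cases hj : j ∈ Set.range emb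
  · obtain ⟨a, rfl⟩ := hj
    rw [hu, mul_zero]
  · simp [hG.col_eq_zero i j hj]

theorem mulVec_apply_emb [Fintype κ] (hemb : Injective emb) (hG : IsZeroPadding emb B G)
    (u : ι → K) (a : κ) :
    (G *ᵥ u) (emb a) = (B *ᵥ (u ∘ emb)) a :=
  (Fintype.sum_of_injective emb hemb _ _
    (fun j hj => by simp [hG.col_eq_zero _ j hj]) (fun b => by simp [hG.apply_emb])).symm

theorem mulVec_mulVec_of_inv [Fintype κ] [DecidableEq κ] {A : Matrix ι ι K} (hemb : Injective emb)
    (hA : IsUnit (A.submatrix emb emb).det) (hG : IsZeroPadding emb (A.submatrix emb emb)⁻¹ G)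
    {w : ι → K} (hw : ∀ i ∉ Set.range emb, w i = 0) : G *ᵥ (A *ᵥ w) = w := by
  have hAw : (A *ᵥ w) ∘ emb = A.submatrix emb emb *ᵥ (w ∘ emb) := by
    ext a
    exact Fintype.sum_of_injective emb hemb _ _ (fun j hj => by simp [hw j hj]) (fun _ => rfl)
      |>.symm
  ext i
  by_cases hi : i ∈ Set.range emb
  · obtain ⟨a, rfl⟩ := hi
    rw [hG.mulVec_apply_emb hemb, hAw, mulVec_mulVec, nonsing_inv_mul _ hA, one_mulVec]
    rfl
  · rw [hw i hi]
    exact Finset.sum_eq_zero fun j _ => by simp [hG.row_eq_zero i hi j]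

theorem mul_eq_one_sub [DecidableEq ι] [Fintype κ] [DecidableEq κ] {A : Matrix ι ι K}
    (hemb : Injective emb)
    (hA : IsUnit (A.submatrix emb emb).det) (hG : IsZeroPadding emb (A.submatrix emb emb)⁻¹ G)
    {i₀ i₁ : ι} (hrange : Set.range emb = {i₀, i₁}ᶜ) {p q : ι → K}
    (hp₀ : p i₀ = 1) (hp₁ : p i₁ = 0) (hq₀ : q i₀ = 0) (hq₁ : q i₁ = 1)
    (hAp : ∀ a, (A *ᵥ p) (emb a) = 0) (hAq : ∀ a, (A *ᵥ q) (emb a) = 0) :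
    G * A = 1 - vecMulVec p (Pi.single i₀ 1) - vecMulVec q (Pi.single i₁ 1) := by
  refine ext_iff_mulVec.2 fun v => ?_
  set w := v - v i₀ • p - v i₁ • q
  have hw : ∀ i ∉ Set.range emb, w i = 0 := by
    intro i hi
    rw [hrange, Set.mem_compl_iff, not_not] at hi
    rcases hi with rfl | rfl <;> simp [w, hp₀, hp₁, hq₀, hq₁]
  have hGAp : G *ᵥ (A *ᵥ p) = 0 := hG.mulVec_eq_zero hAp
  have hGAq : G *ᵥ (A *ᵥ q) = 0 := hG.mulVec_eq_zero hAq
  have hv : v = w + v i₀ • p + v i₁ • q := by simp only [w]; abel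
  calc (G * A) *ᵥ v = G *ᵥ (A *ᵥ w) := by
        conv_lhs => rw [hv]
        simp only [← mulVec_mulVec, mulVec_add, mulVec_smul, hGAp, hGAq, smul_zero, add_zero]
    _ = w := hG.mulVec_mulVec_of_inv hemb hA hw
    _ = _ := by simp [sub_mulVec, vecMulVec_mulVec, w]

end IsZeroPadding

end ZeroPadding

theorem Fin.range_eq_compl_zero_last {n : ℕ} {emb : Fin (n - 1) → Fin (n + 1)}
    (hemb : ∀ i, (emb i : ℕ) = i + 1) : Set.range emb = {0, Fin.last n}ᶜ := by
  ext j
  simp only [Set.mem_range, Set.mem_compl_iff, Set.mem_insert_iff, Set.mem_singleton_iff, not_or,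
    Fin.ext_iff, Fin.val_zero, Fin.val_last]
  constructor
  · rintro ⟨i, hi⟩
    have := hemb i
    have := i.isLt
    omega
  · rintro ⟨h₀, h₁⟩
    have := j.isLt
    refine ⟨⟨j - 1, by omega⟩, ?_⟩
    rw [hemb, Fin.val_mk]
    omega

section Sat

variable {ι K : Type*} [Fintype ι] [Field K]

theorem mul_mul_transpose_mulVec {C : Matrix ι (Fin 2) K} {c₀ c₁ : ι → K}
    (hC : C = of fun i k => if k = 0 then c₀ i else c₁ i) (M : Matrix (Fin 2) (Fin 2) K)
    (u : ι → K) :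
    (C * M * Cᵀ) *ᵥ u = (M 0 0 * (c₀ ⬝ᵥ u) + M 0 1 * (c₁ ⬝ᵥ u)) • c₀
      + (M 1 0 * (c₀ ⬝ᵥ u) + M 1 1 * (c₁ ⬝ᵥ u)) • c₁ := by
  have hCt : Cᵀ *ᵥ u = ![c₀ ⬝ᵥ u, c₁ ⬝ᵥ u] := by
    ext k; fin_cases k <;> simp [hC, mulVec, dotProduct]
  have hCy : ∀ y, C *ᵥ y = y 0 • c₀ + y 1 • c₁ := by
    intro y; ext i; simp [hC, mulVec, dotProduct, Fin.sum_univ_two, mul_comm]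
  rw [← mulVec_mulVec, ← mulVec_mulVec, hCt, hCy]
  simp [mulVec, dotProduct, Fin.sum_univ_two]

variable {σL σR τL τR αL αR βL βR : K}

-- `αL (eL ⬝ᵥ u) - βL (dL ⬝ᵥ u)` and `αR (eR ⬝ᵥ u) + βR (dR ⬝ᵥ u)` are the discrete boundary
-- conditions applied to `u`.
theorem sat_mulVec {A At : Matrix ι ι K} {eL eR dL dR : ι → K} {CL CR : Matrix ι (Fin 2) K}
    {ML MR : Matrix (Fin 2) (Fin 2) K}
    (hCL : CL = of fun i k => if k = 0 then eL i else -dL i)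
    (hCR : CR = of fun i k => if k = 0 then eR i else dR i)
    (hML : ML = !![σL * αL, 1 + σL * βL; τL * αL, τL * βL])
    (hMR : MR = !![σR * αR, 1 + σR * βR; τR * αR, τR * βR])
    (hAt : At = A - CL * ML * CLᵀ - CR * MR * CRᵀ) (u : ι → K) :
    At *ᵥ u = A *ᵥ u - (σL * (αL * (eL ⬝ᵥ u) - βL * (dL ⬝ᵥ u)) - dL ⬝ᵥ u) • eL
      + (τL * (αL * (eL ⬝ᵥ u) - βL * (dL ⬝ᵥ u))) • dL
      - (σR * (αR * (eR ⬝ᵥ u) + βR * (dR ⬝ᵥ u)) + dR ⬝ᵥ u) • eR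
      - (τR * (αR * (eR ⬝ᵥ u) + βR * (dR ⬝ᵥ u))) • dR := by
  rw [hAt, sub_mulVec, sub_mulVec, mul_mul_transpose_mulVec (c₁ := -dL) hCL,
    mul_mul_transpose_mulVec hCR, hML, hMR]
  ext i
  simp only [Pi.add_apply, Pi.sub_apply, Pi.smul_apply, Pi.neg_apply, smul_eq_mul, neg_dotProduct,
    of_apply, cons_val', cons_val_zero, cons_val_one, empty_val', cons_val_fin_one]
  ring

end Sat

section Relations

variable {ι K : Type*} [Fintype ι] [DecidableEq ι] [Field K]

structure SbpRelations (A G : Matrix ι ι K) (eL eR dL dR p q : ι → K) (ℓ : K) : Prop where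
  mul_G : A * G = 1 - vecMulVec eL p - vecMulVec eR q
  G_transpose : Gᵀ = G
  G_mulVec_eL : G *ᵥ eL = 0
  G_mulVec_eR : G *ᵥ eR = 0
  mulVec_p : A *ᵥ p = ℓ⁻¹ • (eL - eR)
  mulVec_q : A *ᵥ q = ℓ⁻¹ • (eR - eL)
  eL_dotProduct_p : eL ⬝ᵥ p = 1
  eR_dotProduct_p : eR ⬝ᵥ p = 0
  eL_dotProduct_q : eL ⬝ᵥ q = 0
  eR_dotProduct_q : eR ⬝ᵥ q = 1
  dL_dotProduct_p : dL ⬝ᵥ p = -ℓ⁻¹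
  dR_dotProduct_p : dR ⬝ᵥ p = -ℓ⁻¹
  dL_dotProduct_q : dL ⬝ᵥ q = ℓ⁻¹
  dR_dotProduct_q : dR ⬝ᵥ q = ℓ⁻¹

namespace SbpRelations

variable {A G : Matrix ι ι K} {eL eR dL dR p q : ι → K} {ℓ : K}

theorem mulVec_G_mulVec (h : SbpRelations A G eL eR dL dR p q ℓ) (u : ι → K) :
    A *ᵥ (G *ᵥ u) = u - (p ⬝ᵥ u) • eL - (q ⬝ᵥ u) • eR := by
  simp [mulVec_mulVec, h.mul_G, sub_mulVec, vecMulVec_mulVec]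

theorem dotProduct_G_mulVec_comm (h : SbpRelations A G eL eR dL dR p q ℓ) (u v : ι → K) :
    u ⬝ᵥ (G *ᵥ v) = v ⬝ᵥ (G *ᵥ u) := by
  rw [dotProduct_mulVec, ← mulVec_transpose, h.G_transpose, dotProduct_comm]

theorem eL_dotProduct_G_mulVec (h : SbpRelations A G eL eR dL dR p q ℓ) (u : ι → K) :
    eL ⬝ᵥ (G *ᵥ u) = 0 := by
  rw [h.dotProduct_G_mulVec_comm, h.G_mulVec_eL, dotProduct_zero]

theorem eR_dotProduct_G_mulVec (h : SbpRelations A G eL eR dL dR p q ℓ) (u : ι → K) :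
    eR ⬝ᵥ (G *ᵥ u) = 0 := by
  rw [h.dotProduct_G_mulVec_comm, h.G_mulVec_eR, dotProduct_zero]

-- In the paper's notation, `b_L = p - G *ᵥ dL` and `b_R = q + G *ᵥ dR`.
theorem eL_dotProduct_bL (h : SbpRelations A G eL eR dL dR p q ℓ) : eL ⬝ᵥ (p - G *ᵥ dL) = 1 := by
  rw [dotProduct_sub, h.eL_dotProduct_G_mulVec, h.eL_dotProduct_p, sub_zero]

theorem eR_dotProduct_bL (h : SbpRelations A G eL eR dL dR p q ℓ) : eR ⬝ᵥ (p - G *ᵥ dL) = 0 := by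
  rw [dotProduct_sub, h.eR_dotProduct_G_mulVec, h.eR_dotProduct_p, sub_zero]

theorem eL_dotProduct_bR (h : SbpRelations A G eL eR dL dR p q ℓ) : eL ⬝ᵥ (q + G *ᵥ dR) = 0 := by
  rw [dotProduct_add, h.eL_dotProduct_G_mulVec, h.eL_dotProduct_q, add_zero]

theorem eR_dotProduct_bR (h : SbpRelations A G eL eR dL dR p q ℓ) : eR ⬝ᵥ (q + G *ᵥ dR) = 1 := by
  rw [dotProduct_add, h.eR_dotProduct_G_mulVec, h.eR_dotProduct_q, add_zero]

theorem mulVec_bL (h : SbpRelations A G eL eR dL dR p q ℓ) : A *ᵥ (p - G *ᵥ dL) = -dL := by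
  rw [mulVec_sub, h.mulVec_p, h.mulVec_G_mulVec, dotProduct_comm p, dotProduct_comm q,
    h.dL_dotProduct_p, h.dL_dotProduct_q]
  module

theorem mulVec_bR (h : SbpRelations A G eL eR dL dR p q ℓ) : A *ᵥ (q + G *ᵥ dR) = dR := by
  rw [mulVec_add, h.mulVec_q, h.mulVec_G_mulVec, dotProduct_comm p, dotProduct_comm q,
    h.dR_dotProduct_p, h.dR_dotProduct_q]
  module

theorem dL_dotProduct_bR (h : SbpRelations A G eL eR dL dR p q ℓ) :
    dL ⬝ᵥ (q + G *ᵥ dR) = -(dR ⬝ᵥ (p - G *ᵥ dL)) := by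
  rw [dotProduct_add, dotProduct_sub, h.dotProduct_G_mulVec_comm, h.dL_dotProduct_q,
    h.dR_dotProduct_p]
  ring

variable {σL σR τL τR αL αR βL βR : K} {At : Matrix ι ι K} {bL bR : ι → K}

theorem sat_mul_G (h : SbpRelations A G eL eR dL dR p q ℓ)
    (hAt : ∀ u, At *ᵥ u = A *ᵥ u - (σL * (αL * (eL ⬝ᵥ u) - βL * (dL ⬝ᵥ u)) - dL ⬝ᵥ u) • eL
      + (τL * (αL * (eL ⬝ᵥ u) - βL * (dL ⬝ᵥ u))) • dL
      - (σR * (αR * (eR ⬝ᵥ u) + βR * (dR ⬝ᵥ u)) + dR ⬝ᵥ u) • eR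
      - (τR * (αR * (eR ⬝ᵥ u) + βR * (dR ⬝ᵥ u))) • dR)
    (hbL : bL = p - G *ᵥ dL) (hbR : bR = q + G *ᵥ dR) {N : Matrix ι (Fin 4) K}
    (hN : N = of fun i k => ![(1 + σL * βL) * eL i - τL * βL * dL i,
      (1 + σR * βR) * eR i + τR * βR * dR i, τL * dL i - σL * eL i, -(σR * eR i + τR * dR i)] k)
    {V : Matrix (Fin 4) ι K} (hV : V = of fun k j => ![bL j, bR j, βL * p j, βR * q j] k) :
    At * G = 1 - N * V := by
  refine ext_iff_mulVec.2 fun v => ?_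
  have hdL : dL ⬝ᵥ (G *ᵥ v) = p ⬝ᵥ v - bL ⬝ᵥ v := by
    rw [h.dotProduct_G_mulVec_comm, show G *ᵥ dL = p - bL by rw [hbL]; abel, dotProduct_sub,
      dotProduct_comm v, dotProduct_comm v]
  have hdR : dR ⬝ᵥ (G *ᵥ v) = bR ⬝ᵥ v - q ⬝ᵥ v := by
    rw [h.dotProduct_G_mulVec_comm, show G *ᵥ dR = bR - q by rw [hbR]; abel, dotProduct_sub,
      dotProduct_comm v, dotProduct_comm v]
  have hVv : V *ᵥ v = ![bL ⬝ᵥ v, bR ⬝ᵥ v, βL * (p ⬝ᵥ v), βR * (q ⬝ᵥ v)] := by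
    ext k; fin_cases k <;> simp [hV, mulVec, dotProduct, Finset.mul_sum, mul_assoc]
  rw [← mulVec_mulVec, hAt, h.mulVec_G_mulVec, h.eL_dotProduct_G_mulVec,
    h.eR_dotProduct_G_mulVec, hdL, hdR, sub_mulVec, one_mulVec, ← mulVec_mulVec, hVv]
  ext i
  simp only [hN, mulVec_cons, mulVec_empty, head_cons, tail_cons, Function.comp_apply,
    Pi.sub_apply, Pi.add_apply, Pi.smul_apply, smul_eq_mul, add_zero]
  ring

theorem sat_mul_U (h : SbpRelations A G eL eR dL dR p q ℓ)
    (hAt : ∀ u, At *ᵥ u = A *ᵥ u - (σL * (αL * (eL ⬝ᵥ u) - βL * (dL ⬝ᵥ u)) - dL ⬝ᵥ u) • eL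
      + (τL * (αL * (eL ⬝ᵥ u) - βL * (dL ⬝ᵥ u))) • dL
      - (σR * (αR * (eR ⬝ᵥ u) + βR * (dR ⬝ᵥ u)) + dR ⬝ᵥ u) • eR
      - (τR * (αR * (eR ⬝ᵥ u) + βR * (dR ⬝ᵥ u))) • dR)
    (hbL : bL = p - G *ᵥ dL) (hbR : bR = q + G *ᵥ dR) {ξL ξR ξC δL δR : K}
    (hξL : ξL = -(dL ⬝ᵥ bL)) (hξR : ξR = dR ⬝ᵥ bR) (hξC : ξC = dL ⬝ᵥ bR)
    (hδL : δL = 1 + σL * βL - τL * αL) (hδR : δR = 1 + σR * βR - τR * αR)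
    {N : Matrix ι (Fin 4) K}
    (hN : N = of fun i k => ![(1 + σL * βL) * eL i - τL * βL * dL i,
      (1 + σR * βR) * eR i + τR * βR * dR i, τL * dL i - σL * eL i, -(σR * eR i + τR * dR i)] k)
    {Sm : Matrix (Fin 4) (Fin 4) K}
    (hS : Sm = !![σL + τL * ξL, -(τR * ξC), 0, 0;
                  -(τL * ξC), σR + τR * ξR, 0, 0;
                  δL, 0, αL + βL / ℓ, -(βL / ℓ);
                  0, δR, -(βR / ℓ), αR + βR / ℓ])
    {U : Matrix ι (Fin 4) K} (hU : U = of fun i k => ![-(τL * bL i), -(τR * bR i), p i, q i] k) :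
    At * U = N * Sm := by
  have hAU : At * U = of fun i k =>
      ![-(τL * (At *ᵥ bL) i), -(τR * (At *ᵥ bR) i), (At *ᵥ p) i, (At *ᵥ q) i] k := by
    ext i k
    fin_cases k <;>
      simp only [hU, mul_apply, mulVec, dotProduct, Fin.zero_eta, Fin.mk_one, Fin.reduceFinMk,
        Fin.isValue, of_apply, cons_val, cons_val_zero, cons_val_one, Finset.mul_sum,
        Finset.sum_neg_distrib, mul_neg, mul_left_comm]
  subst hbL hbR
  have hdLbL : dL ⬝ᵥ (p - G *ᵥ dL) = -ξL := by rw [hξL, neg_neg]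
  have hdRbL : dR ⬝ᵥ (p - G *ᵥ dL) = -ξC := by rw [hξC, h.dL_dotProduct_bR, neg_neg]
  rw [hAU, hAt (p - G *ᵥ dL), hAt (q + G *ᵥ dR), hAt p, hAt q, h.mulVec_bL, h.mulVec_bR,
    h.mulVec_p, h.mulVec_q, h.eL_dotProduct_bL, h.eR_dotProduct_bL, h.eL_dotProduct_bR,
    h.eR_dotProduct_bR, hdLbL, hdRbL, ← hξC, ← hξR, h.eL_dotProduct_p, h.eR_dotProduct_p,
    h.eL_dotProduct_q, h.eR_dotProduct_q, h.dL_dotProduct_p, h.dR_dotProduct_p, h.dL_dotProduct_q,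
    h.dR_dotProduct_q]
  ext i k
  fin_cases k <;>
    simp only [hN, hS, hδL, hδR, mul_apply, Fin.sum_univ_four, Fin.zero_eta, Fin.mk_one,
      Fin.reduceFinMk, Fin.isValue, of_apply, cons_val', cons_val, cons_val_zero, cons_val_one,
      cons_val_fin_one, Pi.sub_apply, Pi.add_apply, Pi.neg_apply, Pi.smul_apply, smul_eq_mul] <;>
    ring

end SbpRelations

end Relations

section Grid

variable {ι K : Type*} [Fintype ι] [Field K]

theorem dotProduct_affine_div {d x : ι → K} (hd1 : d ⬝ᵥ (fun _ => 1) = 0) (hdx : d ⬝ᵥ x = 1)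
    (ℓ : K) : d ⬝ᵥ (fun i => 1 - x i / ℓ) = -ℓ⁻¹ ∧ d ⬝ᵥ (fun i => x i / ℓ) = ℓ⁻¹ := by
  have hq : (fun i => x i / ℓ) = ℓ⁻¹ • x := by ext i; simp [div_eq_inv_mul]
  have hp : (fun i => 1 - x i / ℓ) = (fun _ => 1) - ℓ⁻¹ • x := by rw [← hq]; rfl
  rw [hp, hq, dotProduct_sub, dotProduct_smul, hd1, hdx]
  simp

theorem sbpRelations_of_grid [DecidableEq ι] {κ : Type*} [Fintype κ] [DecidableEq κ]
    {A G : Matrix ι ι K} (hAsym : Aᵀ = A) {emb : κ → ι} (hinj : Injective emb) {i₀ i₁ : ι}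
    (hrange : Set.range emb = {i₀, i₁}ᶜ) (hAb : IsUnit (A.submatrix emb emb).det)
    (hG : IsZeroPadding emb (A.submatrix emb emb)⁻¹ G) {x : ι → K} {ℓ : K} (hℓ : ℓ ≠ 0)
    (hx₀ : x i₀ = 0) (hx₁ : x i₁ = ℓ)
    (hA1 : A *ᵥ (fun i => ℓ - x i) = Pi.single i₀ 1 - Pi.single i₁ 1)
    (hAx : A *ᵥ x = Pi.single i₁ 1 - Pi.single i₀ 1) {dL dR : ι → K}
    (hdL1 : dL ⬝ᵥ (fun _ => 1) = 0) (hdLx : dL ⬝ᵥ x = 1)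
    (hdR1 : dR ⬝ᵥ (fun _ => 1) = 0) (hdRx : dR ⬝ᵥ x = 1) :
    SbpRelations A G (Pi.single i₀ 1) (Pi.single i₁ 1) dL dR (fun i => 1 - x i / ℓ)
      (fun i => x i / ℓ) ℓ := by
  have hint : ∀ a, emb a ≠ i₀ ∧ emb a ≠ i₁ := fun a => by
    simpa [hrange, not_or] using Set.mem_range_self (f := emb) a
  have hAp : A *ᵥ (fun i => 1 - x i / ℓ) = ℓ⁻¹ • (Pi.single i₀ 1 - Pi.single i₁ 1) := by
    rw [← hA1, ← mulVec_smul]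
    congr 1
    ext i
    simp [hℓ, mul_sub, div_eq_inv_mul]
  have hAq : A *ᵥ (fun i => x i / ℓ) = ℓ⁻¹ • (Pi.single i₁ 1 - Pi.single i₀ 1) := by
    rw [← hAx, ← mulVec_smul]
    congr 1
    ext i
    simp [div_eq_inv_mul]
  have hGT : Gᵀ = G :=
    hG.transpose_eq_self (by rw [transpose_nonsing_inv, transpose_submatrix, hAsym])
  have hGA := hG.mul_eq_one_sub hinj hAb hrange (p := fun i => 1 - x i / ℓ)
    (q := fun i => x i / ℓ) (by simp [hx₀]) (by simp [hx₁, hℓ]) (by simp [hx₀]) (by simp [hx₁, hℓ])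
    (fun a => by simp [hAp, hint]) (fun a => by simp [hAq, hint])
  obtain ⟨hdLp, hdLq⟩ := dotProduct_affine_div hdL1 hdLx ℓ
  obtain ⟨hdRp, hdRq⟩ := dotProduct_affine_div hdR1 hdRx ℓ
  refine ⟨?_, hGT, hG.mulVec_eq_zero fun a => by simp [hint],
    hG.mulVec_eq_zero fun a => by simp [hint], hAp, hAq, by simp [hx₀], by simp [hx₁, hℓ],
    by simp [hx₀], by simp [hx₁, hℓ], hdLp, hdRp, hdLq, hdRq⟩
  calc A * G = (G * A)ᵀ := by rw [transpose_mul, hAsym, hGT]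
    _ = _ := by rw [hGA, transpose_sub, transpose_sub, transpose_one, transpose_vecMulVec,
      transpose_vecMulVec]

end Grid

/-- Inverse of the second-derivative SBP-SAT discretization matrix `Ã`
(Theorem 2 of the paper): if the `4 × 4` matrix `Σ` is invertible, then `Ã` is
invertible with the stated explicit inverse. -/
theorem stmt9 (n : ℕ) (hn : 2 ≤ n) (h : ℝ) (hh : 0 < h)
    (A : Matrix (Fin (n+1)) (Fin (n+1)) ℝ) (hAsym : Aᵀ = A)
    (x : Fin (n+1) → ℝ) (hx : x = fun (i : Fin (n+1)) => h * ((i : ℕ) : ℝ))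
    (ℓ : ℝ) (hℓ : ℓ = n * h)
    (eL eR : Fin (n+1) → ℝ)
    (heL : eL = fun i => if i = 0 then 1 else 0)
    (heR : eR = fun i => if i = Fin.last n then 1 else 0)
    (hA1 : A *ᵥ (fun i => ℓ * 1 - x i) = eL - eR)
    (hAx : A *ᵥ x = eR - eL)
    (emb : Fin (n-1) → Fin (n+1))
    (hemb : emb = fun i => ⟨(i : ℕ) + 1, by have := i.isLt; omega⟩)
    (Ab : Matrix (Fin (n-1)) (Fin (n-1)) ℝ)
    (hAb : Ab = Matrix.of fun i j => A (emb i) (emb j))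
    (hAbinv : IsUnit Ab.det)
    (G2 : Matrix (Fin (n+1)) (Fin (n+1)) ℝ)
    (hG2int : ∀ i j : Fin (n-1), G2 (emb i) (emb j) = Ab⁻¹ i j)
    (hG2bd : ∀ j : Fin (n+1), G2 0 j = 0 ∧ G2 (Fin.last n) j = 0
      ∧ G2 j 0 = 0 ∧ G2 j (Fin.last n) = 0)
    (dL dR : Fin (n+1) → ℝ)
    (hdL1 : dL ⬝ᵥ (fun _ => 1) = 0) (hdLx : dL ⬝ᵥ x = 1)
    (hdR1 : dR ⬝ᵥ (fun _ => 1) = 0) (hdRx : dR ⬝ᵥ x = 1)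
    (bL bR : Fin (n+1) → ℝ)
    (hbL : bL = fun i => 1 - x i / ℓ - (G2 *ᵥ dL) i)
    (hbR : bR = fun i => x i / ℓ + (G2 *ᵥ dR) i)
    (ξL ξR ξC : ℝ)
    (hξL : ξL = -(dL ⬝ᵥ bL)) (hξR : ξR = dR ⬝ᵥ bR) (hξC : ξC = dL ⬝ᵥ bR)
    (σL σR τL τR αL αR βL βR : ℝ)
    (δL δR : ℝ) (hδL : δL = 1 + σL * βL - τL * αL)
    (hδR : δR = 1 + σR * βR - τR * αR)
    (CL CR : Matrix (Fin (n+1)) (Fin 2) ℝ)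
    (hCL : CL = Matrix.of fun i k => if k = 0 then eL i else -dL i)
    (hCR : CR = Matrix.of fun i k => if k = 0 then eR i else dR i)
    (ML MR : Matrix (Fin 2) (Fin 2) ℝ)
    (hML : ML = !![σL * αL, 1 + σL * βL; τL * αL, τL * βL])
    (hMR : MR = !![σR * αR, 1 + σR * βR; τR * αR, τR * βR])
    (At : Matrix (Fin (n+1)) (Fin (n+1)) ℝ)
    (hAt : At = A - CL * ML * CLᵀ - CR * MR * CRᵀ)
    (Sm : Matrix (Fin 4) (Fin 4) ℝ)
    (hS : Sm = !![σL + τL * ξL, -(τR * ξC), 0, 0;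
                  -(τL * ξC), σR + τR * ξR, 0, 0;
                  δL, 0, αL + βL / ℓ, -(βL / ℓ);
                  0, δR, -(βR / ℓ), αR + βR / ℓ])
    (hSinv : IsUnit Sm.det)
    (U : Matrix (Fin (n+1)) (Fin 4) ℝ)
    (hU : U = Matrix.of fun i k =>
      ![-(τL * bL i), -(τR * bR i), 1 - x i / ℓ, x i / ℓ] k)
    (V : Matrix (Fin 4) (Fin (n+1)) ℝ)
    (hV : V = Matrix.of fun k j =>
      ![bL j, bR j, βL * (1 - x j / ℓ), βR * (x j / ℓ)] k) :
    IsUnit At.det ∧ At⁻¹ = G2 + U * Sm⁻¹ * V := by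
  have hemb' : ∀ i, (emb i : ℕ) = i + 1 := by
    subst hemb
    exact fun _ => rfl
  have hinj : Injective emb := fun a b hab => Fin.ext <| by
    have := congrArg Fin.val hab
    rw [hemb', hemb'] at this
    omega
  have hrange := Fin.range_eq_compl_zero_last hemb'
  have hℓ0 : ℓ ≠ 0 := by
    rw [hℓ]
    have : (0 : ℝ) < n := by exact_mod_cast (by omega : 0 < n)
    positivity
  obtain rfl : eL = Pi.single 0 1 := by rw [heL]; ext i; simp [Pi.single_apply]
  obtain rfl : eR = Pi.single (Fin.last n) 1 := by rw [heR]; ext i; simp [Pi.single_apply]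
  subst hAb
  have hrel := sbpRelations_of_grid hAsym hinj hrange hAbinv
    (.of_range_eq_compl_pair hrange hG2int hG2bd) hℓ0 (by simp [hx]) (by simp [hx, hℓ, mul_comm])
    (by simpa using hA1) hAx hdL1 hdLx hdR1 hdRx
  have hAt' := sat_mulVec hCL hCR hML hMR hAt
  have key := mul_add_mul_inv_mul_eq_one (hrel.sat_mul_G hAt' hbL hbR rfl hV)
    (hrel.sat_mul_U hAt' hbL hbR hξL hξR hξC hδL hδR rfl hS hU) hSinv
  exact ⟨isUnit_det_of_right_inverse key, inv_eq_right_inv key⟩
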